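/- arXiv:2008.05915 — 10 statements merged into one kernel-verified Lean document; each statement's English description precedes it below -/
import Mathlib

section
/- In the lattice L with k = 8, set P = H − E₁ − E₂ − X, S = 3H − (E₂ + E₃ + E₄ + E₅ + E₆ + E₇) − 2X − Y, and vᵢ = E_{i+1} − E_i for i = 1,…,6. Then: (i) ⟨S,S⟩ = ⟨P,P⟩ = ⟨vᵢ,vᵢ⟩ = −2 for all i; (ii) the pairings among the eight vectors S, −P, v₁,…,v₆ are ⟨S,v₁⟩ = 1, ⟨−P,v₂⟩ = 1, ⟨vᵢ,v_{i+1}⟩ = 1 for i = 1,…,5, and all other pairings between distinct vectors in the list are 0 (in particular ⟨S,−P⟩ = 0, ⟨S,vᵢ⟩ = 0 for i ≥ 2, ⟨−P,vᵢ⟩ = 0 for i ≠ 2), so the intersection graph of the eight vectors is the E₈ Dynkin diagram with trivalent vertex v₂; (iii) each of the eight vectors is orthogonal to E', G', F and C; (iv) ⟨v,D⟩ = 0 for each vector v in the list except v₂, and ⟨v₂,D⟩ = 1. -/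
namespace ALE.E8

/-- The lattice `L ≅ ℤ¹²` (`k = 8`) with basis `H, E₁, …, E₇, X, Y, F, C`
(indices `0, 1, …, 7, 8, 9, 10, 11`). -/
abbrev L : Type := Fin 12 → ℤ

/-- The intersection pairing: distinct basis vectors are orthogonal, `⟨H,H⟩ = 1`
and every other basis vector has self-pairing `−1`. -/
def pairing (u v : L) : ℤ := ∑ i, (if i = 0 then 1 else -1) * u i * v i

def H : L := Pi.single 0 1
open Fin.NatCast in
def E (i : ℕ) : L := Pi.single (i : Fin 12) 1
def X : L := Pi.single 8 1
def Y : L := Pi.single 9 1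
def F : L := Pi.single 10 1
def C : L := Pi.single 11 1

/-- `E' = 2H − (E₁ + ⋯ + E₇) − F − C`. -/
def E' : L := (2 : ℤ) • H - (∑ i ∈ Finset.Icc 1 7, E i) - F - C

/-- `G' = H − X − F − Y − C`. -/
def G' : L := H - X - F - Y - C

/-- `D = E' + Σ_{i=3}^{7} (H − Eᵢ − X)`, the class of the polar divisor
`E + Ē₃ + ⋯ + Ē₇`. -/
def D : L := E' + ∑ i ∈ Finset.Icc 3 7, (H - E i - X)

/-- `P = H − E₁ − E₂ − X`. -/
def P : L := H - E 1 - E 2 - X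

/-- `S = 3H − (E₂ + E₃ + E₄ + E₅ + E₆ + E₇) − 2X − Y`. -/
def S : L := (3 : ℤ) • H - (E 2 + E 3 + E 4 + E 5 + E 6 + E 7) - (2 : ℤ) • X - Y

/-- `vᵢ = E_{i+1} − Eᵢ`. -/
def v (i : ℕ) : L := E (i + 1) - E i

/-- The list of eight vectors `S, −P, v₁, …, v₆`. -/
def w : Fin 8 → L := ![S, -P, v 1, v 2, v 3, v 4, v 5, v 6]

/-- The edges of the E₈ Dynkin diagram on the eight vectors: `S–v₁`, `−P–v₂`,
and `vᵢ–v_{i+1}` for `i = 1, …, 5`; the trivalent vertex is `v₂` (index `3`). -/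
def edges : List (Fin 8 × Fin 8) := [(0, 2), (1, 3), (2, 3), (3, 4), (4, 5), (5, 6), (6, 7)]

/-!
Every claim is a finite computation with the diagonal form on `ℤ¹²`. The pattern in (iv) comes
from the coordinates `D = 7H − E₁ − E₂ − 2(E₃ + ⋯ + E₇) − 5X − F − C`: `⟨Eⱼ, D⟩` is `1` for
`j ≤ 2` and `2` for `j ≥ 3`, so among the `vᵢ = E_{i+1} − Eᵢ` only `v₂` pairs nontrivially
with `D`.
-/

theorem D_eq : D = ![7, -1, -1, -2, -2, -2, -2, -2, -5, 0, -1, -1] := by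
  decide

theorem pairing_self_eq_neg_two :
    pairing S S = -2 ∧ pairing P P = -2 ∧ ∀ i ∈ Finset.Icc 1 6, pairing (v i) (v i) = -2 := by
  decide

theorem pairing_w_of_ne (i j : Fin 8) (hij : i ≠ j) :
    pairing (w i) (w j) = if (i, j) ∈ edges ∨ (j, i) ∈ edges then 1 else 0 := by
  revert i j
  decide

theorem pairing_w_E'_G'_F_C (i : Fin 8) :
    pairing (w i) E' = 0 ∧ pairing (w i) G' = 0 ∧ pairing (w i) F = 0 ∧ pairing (w i) C = 0 := by
  revert i
  decide

theorem pairing_w_D (i : Fin 8) : pairing (w i) D = if i = 3 then 1 else 0 := by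
  rw [D_eq]
  revert i
  decide

theorem e8_dynkin_diagram :
    -- (i) all eight vectors have self-intersection −2
    (pairing S S = -2 ∧ pairing P P = -2 ∧
      ∀ i ∈ Finset.Icc 1 6, pairing (v i) (v i) = -2) ∧
    -- (ii) pairings between distinct vectors in the list `S, −P, v₁, …, v₆`:
    -- they are `1` exactly on the edges of the E₈ Dynkin diagram
    -- (`⟨S,v₁⟩ = ⟨−P,v₂⟩ = ⟨vᵢ,v_{i+1}⟩ = 1`) and `0` otherwise
    (∀ i j : Fin 8, i ≠ j →
      pairing (w i) (w j) = if (i, j) ∈ edges ∨ (j, i) ∈ edges then 1 else 0) ∧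
    -- (iii) each of the eight vectors is orthogonal to E', G', F and C
    (∀ i : Fin 8, pairing (w i) E' = 0 ∧ pairing (w i) G' = 0 ∧
      pairing (w i) F = 0 ∧ pairing (w i) C = 0) ∧
    -- (iv) `⟨v₂, D⟩ = 1` (the trivalent vertex, index 3) and `⟨v, D⟩ = 0`
    -- for every other vector in the list
    (∀ i : Fin 8, pairing (w i) D = if i = 3 then 1 else 0) :=
  ⟨pairing_self_eq_neg_two, pairing_w_of_ne, pairing_w_E'_G'_F_C, pairing_w_D⟩

end ALE.E8
end

section
/- In the lattice L with k = 7, set P = H − E₁ − E₂ − X, R = 2H − (E₃ + E₄ + E₅ + E₆) − X − Y, and vᵢ = E_{i+1} − E_i for i = 1,…,5. Then: (i) ⟨P+R, P+R⟩ = ⟨R,R⟩ = ⟨vᵢ,vᵢ⟩ = −2 for all i, and ⟨P,R⟩ = 1; (ii) among the seven vectors P+R, R, v₁,…,v₅ the nonzero pairings between distinct vectors are exactly ⟨P+R, R⟩ = −1, ⟨R, v₂⟩ = 1 and ⟨vᵢ, v_{i+1}⟩ = 1 for i = 1,…,4, all other pairings between distinct vectors in the list being 0; hence the graph whose edges are pairs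 with pairing of absolute value 1 is the E₇ Dynkin diagram with trivalent vertex v₂; (iii) each of the seven vectors is orthogonal to E', G', F and C; (iv) ⟨v,D⟩ = 0 for each vector v in the list except v₂, and ⟨v₂,D⟩ = 1. -/
namespace ALE.E7

/-- The lattice `L ≅ ℤ¹¹` (`k = 7`) with basis `H, E₁, …, E₆, X, Y, F, C`
(indices `0, 1, …, 6, 7, 8, 9, 10`). -/
abbrev L : Type := Fin 11 → ℤ

/-- The intersection pairing: distinct basis vectors are orthogonal, `⟨H,H⟩ = 1`
and every other basis vector has self-pairing `−1`. -/
def pairing (u v : L) : ℤ := ∑ i, (if i = 0 then 1 else -1) * u i * v i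

def H : L := Pi.single 0 1
open Fin.NatCast in
def E (i : ℕ) : L := Pi.single (i : Fin 11) 1
def X : L := Pi.single 7 1
def Y : L := Pi.single 8 1
def F : L := Pi.single 9 1
def C : L := Pi.single 10 1

/-- `E' = 2H − (E₁ + ⋯ + E₆) − F − C`. -/
def E' : L := (2 : ℤ) • H - (∑ i ∈ Finset.Icc 1 6, E i) - F - C

/-- `G' = H − X − F − Y − C`. -/
def G' : L := H - X - F - Y - C

/-- `D = E' + Σ_{i=3}^{6} (H − Eᵢ − X)`, the class of the polar divisor
`E + Ē₃ + ⋯ + Ē₆`. -/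
def D : L := E' + ∑ i ∈ Finset.Icc 3 6, (H - E i - X)

/-- `P = H − E₁ − E₂ − X`. -/
def P : L := H - E 1 - E 2 - X

/-- `R = 2H − (E₃ + E₄ + E₅ + E₆) − X − Y`. -/
def R : L := (2 : ℤ) • H - (E 3 + E 4 + E 5 + E 6) - X - Y

/-- `vᵢ = E_{i+1} − Eᵢ`. -/
def v (i : ℕ) : L := E (i + 1) - E i

/-- The list of seven vectors `P + R, R, v₁, …, v₅`. -/
def w : Fin 7 → L := ![P + R, R, v 1, v 2, v 3, v 4, v 5]

/-- The pairs of distinct vectors with pairing `1`: `R–v₂` and `vᵢ–v_{i+1}` for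
`i = 1, …, 4`; the trivalent vertex of the resulting E₇ diagram is `v₂` (index `3`). -/
def edges : List (Fin 7 × Fin 7) := [(1, 3), (2, 3), (3, 4), (4, 5), (5, 6)]

theorem pairing_add_right (u v₁ v₂ : L) :
    pairing u (v₁ + v₂) = pairing u v₁ + pairing u v₂ := by
  simp only [pairing, Pi.add_apply, mul_add, Finset.sum_add_distrib]

theorem pairing_sum_right {ι : Type*} (s : Finset ι) (u : L) (f : ι → L) :
    pairing u (∑ i ∈ s, f i) = ∑ i ∈ s, pairing u (f i) := by
  simp only [pairing, Finset.sum_apply, Finset.mul_sum]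
  exact Finset.sum_comm

theorem pairing_P_add_R_self : pairing (P + R) (P + R) = -2 := by decide

theorem pairing_R_self : pairing R R = -2 := by decide

theorem pairing_v_self : ∀ i ∈ Finset.Icc 1 5, pairing (v i) (v i) = -2 := by decide

theorem pairing_P_R : pairing P R = 1 := by decide

theorem pairing_w_of_ne : ∀ i j : Fin 7, i ≠ j →
    pairing (w i) (w j) =
      if (i, j) = ((0 : Fin 7), (1 : Fin 7)) ∨ (j, i) = ((0 : Fin 7), (1 : Fin 7)) then -1
      else if (i, j) ∈ edges ∨ (j, i) ∈ edges then 1 else 0 := by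
  decide

theorem pairing_w_E' : ∀ i : Fin 7, pairing (w i) E' = 0 := by decide

theorem pairing_w_G' : ∀ i : Fin 7, pairing (w i) G' = 0 := by decide

theorem pairing_w_F : ∀ i : Fin 7, pairing (w i) F = 0 := by decide

theorem pairing_w_C : ∀ i : Fin 7, pairing (w i) C = 0 := by decide

/- `P` and `R` are orthogonal to every `H − Eⱼ − X`, and `vᵢ = E_{i+1} − Eᵢ` pairs with the sum over
`j = 3, …, 6` to zero unless exactly one of `i, i + 1` lies in that range, i.e. `i = 2`. -/
theorem pairing_w_D (i : Fin 7) : pairing (w i) D = if i = 3 then 1 else 0 := by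
  rw [D, pairing_add_right, pairing_w_E', zero_add, pairing_sum_right]
  revert i
  decide

theorem e7_dynkin_diagram :
    -- (i) all seven vectors have self-intersection −2, and `⟨P, R⟩ = 1`
    (pairing (P + R) (P + R) = -2 ∧ pairing R R = -2 ∧
      (∀ i ∈ Finset.Icc 1 5, pairing (v i) (v i) = -2) ∧ pairing P R = 1) ∧
    -- (ii) among the seven vectors `P+R, R, v₁, …, v₅` the nonzero pairings between
    -- distinct vectors are exactly `⟨P+R, R⟩ = −1`, `⟨R, v₂⟩ = 1` and
    -- `⟨vᵢ, v_{i+1}⟩ = 1` for `i = 1, …, 4`; all other pairings vanish.  Hence the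
    -- graph whose edges are the pairs with pairing of absolute value 1 is the E₇
    -- Dynkin diagram with trivalent vertex `v₂` (index 3)
    (∀ i j : Fin 7, i ≠ j →
      pairing (w i) (w j) =
        if (i, j) = ((0 : Fin 7), (1 : Fin 7)) ∨ (j, i) = ((0 : Fin 7), (1 : Fin 7)) then -1
        else if (i, j) ∈ edges ∨ (j, i) ∈ edges then 1 else 0) ∧
    -- (iii) each of the seven vectors is orthogonal to E', G', F and C
    (∀ i : Fin 7, pairing (w i) E' = 0 ∧ pairing (w i) G' = 0 ∧
      pairing (w i) F = 0 ∧ pairing (w i) C = 0) ∧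
    -- (iv) `⟨v₂, D⟩ = 1` (the trivalent vertex, index 3) and `⟨v, D⟩ = 0`
    -- for every other vector in the list
    (∀ i : Fin 7, pairing (w i) D = if i = 3 then 1 else 0) :=
  ⟨⟨pairing_P_add_R_self, pairing_R_self, pairing_v_self, pairing_P_R⟩, pairing_w_of_ne,
    fun i => ⟨pairing_w_E' i, pairing_w_G' i, pairing_w_F i, pairing_w_C i⟩, pairing_w_D⟩

end ALE.E7
end

section
/- Suppose a₁, a₂, a₃, a₄ ∈ ℂ satisfy aᵢ + aⱼ ≠ 0 and aᵢ − aⱼ ≠ 0 for all i ≠ j (equivalently the squares aᵢ² are pairwise distinct). Let σ'₁, σ'₂, σ'₃ be the elementary symmetric functions of a₁², a₂², a₃², a₄² of degrees 1, 2, 3, let p = a₁a₂a₃a₄, and let F(w,x,y,z) = w x² − z y² + z³ + σ'₁ z² w + σ'₂ z w² + σ'₃ w³ − 2 p y w². Then F is a nonsingular cubic form: if (w,x,y,z) ∈ ℂ⁴ satisfies ∂F/∂w = ∂F/∂x = ∂F/∂y = ∂F/∂z = 0 at (w,x,y,z), then (w,x,y,z) = (0,0,0,0). In particular the projective cubic surface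 F = 0 in ℙ³ is smooth. -/
/-! At a critical point Euler's relation gives `F = 0` as well. On the plane `w = 0` the
equations `F_y = F_z = 0` read `zy = 0`, `y² = 3z²`, forcing `y = z = 0` and then `x = 0`.
Off that plane `F_x = 2wx` forces `x = 0`, and then
`Q(t) := ∏ᵢ (t + aᵢ² w) = (ty + pw²)² + t F(w, 0, y, t)`.
Differentiating in `t`, `F_y = F_z = F = 0` make `z` a double root of `Q`, so two of the
`aᵢ²` coincide. -/

open Finset

-- The sum is the derivative of `∏ i, (X - r i)` at `t`: its roots are simple.
theorem sum_prod_erase_sub_ne_zero {R ι : Type*} [CommRing R] [IsDomain R] [Fintype ι]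
    [DecidableEq ι] {r : ι → R} (hr : Function.Injective r) {t : R}
    (ht : ∏ i, (t - r i) = 0) : ∑ i, ∏ j ∈ univ.erase i, (t - r j) ≠ 0 := by
  obtain ⟨i, -, hi⟩ := prod_eq_zero_iff.mp ht
  obtain rfl : t = r i := sub_eq_zero.mp hi
  rw [sum_eq_single i (fun k _ hk => prod_eq_zero (mem_erase.mpr ⟨Ne.symm hk, mem_univ i⟩) hi)
    (by simp)]
  exact prod_ne_zero_iff.mpr fun j hj => sub_ne_zero.mpr (hr.ne (ne_of_mem_erase hj).symm)

theorem injective_sq_of_add_ne_zero_of_sub_ne_zero {R ι : Type*} [CommRing R] [NoZeroDivisors R]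
    {a : ι → R} (ha : ∀ i j, i ≠ j → a i + a j ≠ 0 ∧ a i - a j ≠ 0) :
    Function.Injective fun i => a i ^ 2 := by
  intro i j hij
  by_contra hne
  obtain ⟨hadd, hsub⟩ := ha i j hne
  rcases sq_eq_sq_iff_eq_or_eq_neg.mp hij with h | h
  · exact hsub (sub_eq_zero.mpr h)
  · exact hadd (by rw [h, neg_add_cancel])

theorem eq_zero_of_mul_eq_zero_of_sq_eq_three_mul_sq {K : Type*} [Field K] [CharZero K] {y z : K}
    (h : z * y = 0) (h' : y ^ 2 = 3 * z ^ 2) : y = 0 ∧ z = 0 := by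
  rcases mul_eq_zero.mp h with rfl | rfl
  · exact ⟨by simpa using h', rfl⟩
  · exact ⟨rfl, by simpa using h'⟩

/-- The projective completion of the D₄ surface of the versal deformation is a
nonsingular cubic surface: if all four partial derivatives of the cubic form `F`
vanish at `(w,x,y,z) ∈ ℂ⁴`, then `(w,x,y,z) = (0,0,0,0)`. -/
theorem d4_cubic_form_nonsingular (a₁ a₂ a₃ a₄ : ℂ)
    (ha : ∀ i j : Fin 4, i ≠ j →
      ![a₁, a₂, a₃, a₄] i + ![a₁, a₂, a₃, a₄] j ≠ 0 ∧
      ![a₁, a₂, a₃, a₄] i - ![a₁, a₂, a₃, a₄] j ≠ 0)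
    (σ'₁ σ'₂ σ'₃ p : ℂ)
    (hσ₁ : σ'₁ = a₁ ^ 2 + a₂ ^ 2 + a₃ ^ 2 + a₄ ^ 2)
    (hσ₂ : σ'₂ = a₁ ^ 2 * a₂ ^ 2 + a₁ ^ 2 * a₃ ^ 2 + a₁ ^ 2 * a₄ ^ 2
      + a₂ ^ 2 * a₃ ^ 2 + a₂ ^ 2 * a₄ ^ 2 + a₃ ^ 2 * a₄ ^ 2)
    (hσ₃ : σ'₃ = a₁ ^ 2 * a₂ ^ 2 * a₃ ^ 2 + a₁ ^ 2 * a₂ ^ 2 * a₄ ^ 2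
      + a₁ ^ 2 * a₃ ^ 2 * a₄ ^ 2 + a₂ ^ 2 * a₃ ^ 2 * a₄ ^ 2)
    (hp : p = a₁ * a₂ * a₃ * a₄)
    (F : ℂ → ℂ → ℂ → ℂ → ℂ)
    (hF : ∀ w x y z, F w x y z =
      w * x ^ 2 - z * y ^ 2 + z ^ 3 + σ'₁ * z ^ 2 * w + σ'₂ * z * w ^ 2
        + σ'₃ * w ^ 3 - 2 * p * y * w ^ 2)
    (w x y z : ℂ)
    (hw : deriv (fun t => F t x y z) w = 0)
    (hx : deriv (fun t => F w t y z) x = 0)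
    (hy : deriv (fun t => F w x t z) y = 0)
    (hz : deriv (fun t => F w x y t) z = 0) :
    w = 0 ∧ x = 0 ∧ y = 0 ∧ z = 0 := by
  simp (disch := fun_prop) only [hF, deriv_fun_add, deriv_fun_sub, deriv_fun_mul, deriv_const,
    deriv_id'', deriv_fun_pow, deriv_const_mul_id] at hw hx hy hz
  have Fw : x ^ 2 + σ'₁ * z ^ 2 + 2 * σ'₂ * z * w + 3 * σ'₃ * w ^ 2 - 4 * p * y * w = 0 := by
    linear_combination hw
  have Fx : w * x = 0 := by linear_combination hx / 2
  have Fy : z * y + p * w ^ 2 = 0 := by linear_combination -hy / 2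
  have Fz : -y ^ 2 + 3 * z ^ 2 + 2 * σ'₁ * z * w + σ'₂ * w ^ 2 = 0 := by linear_combination hz
  by_cases hw0 : w = 0
  · subst hw0
    obtain ⟨rfl, rfl⟩ := eq_zero_of_mul_eq_zero_of_sq_eq_three_mul_sq (y := y) (z := z)
      (by linear_combination Fy) (by linear_combination -Fz)
    exact ⟨rfl, pow_eq_zero_iff two_ne_zero |>.mp (by linear_combination Fw), rfl, rfl⟩
  obtain rfl : x = 0 := (mul_eq_zero.mp Fx).resolve_left hw0
  subst hσ₁ hσ₂ hσ₃ hp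
  let r : Fin 4 → ℂ := fun i => -(![a₁, a₂, a₃, a₄] i ^ 2 * w)
  have hr : Function.Injective r := neg_injective.comp
    ((mul_left_injective₀ hw0).comp (injective_sq_of_add_ne_zero_of_sub_ne_zero ha))
  -- `w * Fw - 2 * y * Fy + z * Fz` is `3 F(w, 0, y, z)` by Euler's relation
  refine absurd ?_ (sum_prod_erase_sub_ne_zero hr (t := z) ?_)
  · simp only [← filter_ne', prod_filter, Fin.sum_univ_four, Fin.prod_univ_four, r, ne_eq,
      Fin.reduceEq, not_true_eq_false, not_false_eq_true, ↓reduceIte, Matrix.cons_val]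
    linear_combination 2 * y * Fy + (w * Fw - 2 * y * Fy + z * Fz) / 3 + z * Fz
  · simp only [Fin.prod_univ_four, r, Matrix.cons_val]
    linear_combination (z * y + a₁ * a₂ * a₃ * a₄ * w ^ 2) * Fy
      + z * (w * Fw - 2 * y * Fy + z * Fz) / 3
end

section
/- Let k ≥ 1 and a₁,…,a_k ∈ ℂ. Then there exists a unique pair of polynomials P, Q ∈ ℂ[z] such that ∏_{i=1}^{k}(aᵢ + i t) = Q(t²) + i t P(t²) for all t ∈ ℂ. Moreover these polynomials satisfy z·P(z)² + Q(z)² = ∏_{i=1}^{k}(z + aᵢ²) for all z ∈ ℂ, and Q(0) = ∏_{i=1}^{k} aᵢ. -/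
open Polynomial

/-! Split `∏ᵢ (aᵢ + i t)` into its even and odd parts in `t`: every polynomial is
`Q(X²) + X P(X²)`, and this decomposition is unique in characteristic `≠ 2` since `t ↦ -t`
separates the two parts. Multiplying the values at `t` and `-t` gives
`Q(t²)² + t² P(t²)² = ∏ᵢ (aᵢ + i t)(aᵢ - i t) = ∏ᵢ (t² + aᵢ²)`, and every `z ∈ ℂ` is a square. -/

theorem exists_eq_expand_two_add_X_mul_expand_two {R : Type*} [CommSemiring R] (f : R[X]) :
    ∃ P Q : R[X], f = expand R 2 Q + X * expand R 2 P := by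
  induction f using Polynomial.induction_on' with
  | add p q hp hq =>
    obtain ⟨P₁, Q₁, rfl⟩ := hp
    obtain ⟨P₂, Q₂, rfl⟩ := hq
    exact ⟨P₁ + P₂, Q₁ + Q₂, by simp only [map_add]; ring⟩
  | monomial n c =>
    obtain ⟨m, rfl | rfl⟩ := Nat.even_or_odd' n
    · exact ⟨0, monomial m c, by simp [expand_monomial, mul_comm]⟩
    · exact ⟨monomial m c, 0, by simp [expand_monomial, X_mul_monomial, mul_comm]⟩

section Field

variable {K : Type*} [Field K]

theorem exists_eval_eq_eval_sq_add_mul_eval_sq {c : K} (hc : c ≠ 0) (f : K[X]) :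
    ∃ P Q : K[X], ∀ t, f.eval t = Q.eval (t ^ 2) + c * t * P.eval (t ^ 2) := by
  obtain ⟨P, Q, rfl⟩ := exists_eq_expand_two_add_X_mul_expand_two f
  refine ⟨C c⁻¹ * P, Q, fun t => ?_⟩
  simp only [eval_add, eval_mul, eval_X, eval_C, expand_eval]
  field_simp

variable [Infinite K] [NeZero (2 : K)]

theorem eq_zero_of_eval_sq_add_mul_eval_sq_eq_zero {c : K} (hc : c ≠ 0) {P Q : K[X]}
    (h : ∀ t, Q.eval (t ^ 2) + c * t * P.eval (t ^ 2) = 0) : P = 0 ∧ Q = 0 := by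
  have h_neg (t : K) : Q.eval (t ^ 2) - c * t * P.eval (t ^ 2) = 0 := by
    simpa only [neg_sq, mul_neg, neg_mul, ← sub_eq_add_neg] using h (-t)
  have hQ : expand K 2 Q = 0 := Polynomial.funext fun t => by
    have : (2 : K) * Q.eval (t ^ 2) = 0 := by linear_combination h t + h_neg t
    rw [expand_eval, eval_zero]
    exact (mul_eq_zero.1 this).resolve_left two_ne_zero
  have hP : X * expand K 2 P = 0 := Polynomial.funext fun t => by
    have : (2 * c) * (t * P.eval (t ^ 2)) = 0 := by linear_combination h t - h_neg t
    rw [eval_mul, eval_X, expand_eval, eval_zero]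
    exact (mul_eq_zero.1 this).resolve_left (mul_ne_zero two_ne_zero hc)
  rw [mul_eq_zero, or_iff_right X_ne_zero] at hP
  exact ⟨(expand_eq_zero two_pos).1 hP, (expand_eq_zero two_pos).1 hQ⟩

theorem existsUnique_eval_eq_eval_sq_add_mul_eval_sq {c : K} (hc : c ≠ 0) (f : K[X]) :
    ∃! PQ : K[X] × K[X], ∀ t, f.eval t = PQ.2.eval (t ^ 2) + c * t * PQ.1.eval (t ^ 2) := by
  obtain ⟨P, Q, hPQ⟩ := exists_eval_eq_eval_sq_add_mul_eval_sq hc f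
  refine ⟨(P, Q), hPQ, fun ⟨P', Q'⟩ hPQ' => ?_⟩
  obtain ⟨hP, hQ⟩ := eq_zero_of_eval_sq_add_mul_eval_sq_eq_zero hc (P := P' - P) (Q := Q' - Q)
    fun t => by simp only [eval_sub]; linear_combination hPQ t - hPQ' t
  rw [Prod.mk.injEq, ← sub_eq_zero, ← sub_eq_zero (a := Q')]
  exact ⟨hP, hQ⟩

end Field

theorem tyurina_even_odd_polynomials_general (k : ℕ) (a : Fin k → ℂ) :
    (∃! PQ : ℂ[X] × ℂ[X],
      ∀ t : ℂ, ∏ i, (a i + Complex.I * t)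
        = PQ.2.eval (t ^ 2) + Complex.I * t * PQ.1.eval (t ^ 2)) ∧
    ∀ P Q : ℂ[X],
      (∀ t : ℂ, ∏ i, (a i + Complex.I * t)
        = Q.eval (t ^ 2) + Complex.I * t * P.eval (t ^ 2)) →
      (∀ z : ℂ, z * P.eval z ^ 2 + Q.eval z ^ 2 = ∏ i, (z + a i ^ 2)) ∧
        Q.eval 0 = ∏ i, a i := by
  refine ⟨?_, fun P Q h => ⟨fun z => ?_, by simpa using (h 0).symm⟩⟩
  · have hF (t : ℂ) : (∏ i, (C (a i) + C Complex.I * X)).eval t = ∏ i, (a i + Complex.I * t) := by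
      simp [eval_prod]
    simp_rw [← hF]
    exact existsUnique_eval_eq_eval_sq_add_mul_eval_sq Complex.I_ne_zero _
  · obtain ⟨t, rfl⟩ := IsAlgClosed.exists_pow_nat_eq z two_pos
    calc t ^ 2 * P.eval (t ^ 2) ^ 2 + Q.eval (t ^ 2) ^ 2
        = (∏ i, (a i + Complex.I * t)) * ∏ i, (a i + Complex.I * -t) := by
          rw [h, h, neg_sq]; linear_combination t ^ 2 * P.eval (t ^ 2) ^ 2 * Complex.I_sq
      _ = ∏ i, (t ^ 2 + a i ^ 2) := by
          rw [← Finset.prod_mul_distrib]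
          exact Finset.prod_congr rfl fun i _ => by linear_combination -t ^ 2 * Complex.I_sq

/-- Tyurina's polynomials `P`, `Q` for the D-type simultaneous resolution:
there is a unique pair of polynomials `P, Q ∈ ℂ[z]` with
`∏ᵢ (aᵢ + i t) = Q(t²) + i t P(t²)` for all `t`, and any such pair satisfies
`z P(z)² + Q(z)² = ∏ᵢ (z + aᵢ²)` and `Q(0) = ∏ᵢ aᵢ`. -/
theorem tyurina_even_odd_polynomials (k : ℕ) (hk : 1 ≤ k) (a : Fin k → ℂ) :
    (∃! PQ : ℂ[X] × ℂ[X],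
      ∀ t : ℂ, ∏ i, (a i + Complex.I * t)
        = PQ.2.eval (t ^ 2) + Complex.I * t * PQ.1.eval (t ^ 2)) ∧
    ∀ P Q : ℂ[X],
      (∀ t : ℂ, ∏ i, (a i + Complex.I * t)
        = Q.eval (t ^ 2) + Complex.I * t * P.eval (t ^ 2)) →
      (∀ z : ℂ, z * P.eval z ^ 2 + Q.eval z ^ 2 = ∏ i, (z + a i ^ 2)) ∧
        Q.eval 0 = ∏ i, a i :=
  tyurina_even_odd_polynomials_general k a
end

section
/- Let k ≥ 1, a₁,…,a_k ∈ ℂ, p = ∏ aᵢ, and let P, Q ∈ ℂ[z] satisfy ∏_{i=1}^{k}(aᵢ + i t) = Q(t²) + i t P(t²) for all t ∈ ℂ, and let S ∈ ℂ[z] be the polynomial with z·S(z) = Q(z) − p. Then for all x, y ∈ ℂ and all z ∈ ℂ with z ≠ 0, the equation x² − z y² = −(1/z)(∏_{i=1}^{k}(z + aᵢ²) − p²) + 2 p y holds if and only if (x + i P(z))(x − i P(z)) = (y − S(z))·(z·(y + S(z)) + 2p). -/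
open Polynomial

/-- Tyurina's factorization of the D-type surface: for `z ≠ 0` the equation
`x² − z y² = −(1/z)(∏ᵢ(z + aᵢ²) − p²) + 2py` is equivalent to
`(x + iP(z))(x − iP(z)) = (y − S(z))(z(y + S(z)) + 2p)`. -/
theorem d_surface_factorization (k : ℕ) (hk : 1 ≤ k) (a : Fin k → ℂ)
    (p : ℂ) (hp : p = ∏ i, a i)
    (P Q : ℂ[X])
    (hPQ : ∀ t : ℂ, ∏ i, (a i + Complex.I * t)
      = Q.eval (t ^ 2) + Complex.I * t * P.eval (t ^ 2))
    (S : ℂ[X]) (hS : ∀ z : ℂ, z * S.eval z = Q.eval z - p) :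
    ∀ x y z : ℂ, z ≠ 0 →
      (x ^ 2 - z * y ^ 2 = -(1 / z) * ((∏ i, (z + a i ^ 2)) - p ^ 2) + 2 * p * y ↔
        (x + Complex.I * P.eval z) * (x - Complex.I * P.eval z)
          = (y - S.eval z) * (z * (y + S.eval z) + 2 * p)) := by
  have hQ : ∀ z : ℂ, (∏ i, (z + a i ^ 2))
      = Q.eval z ^ 2 + z * P.eval z ^ 2 := by
    intro z
    obtain ⟨t, ht⟩ : ∃ t : ℂ, t ^ 2 = z :=
      ⟨z ^ (((2 : ℕ) : ℂ))⁻¹, Complex.cpow_nat_inv_pow z two_ne_zero⟩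
    have h1 := hPQ t
    have h2 := hPQ (-t)
    have hneg : (-t : ℂ) ^ 2 = t ^ 2 := by ring
    rw [hneg] at h2
    have key : (∏ i, (z + a i ^ 2))
        = (∏ i, (a i + Complex.I * t)) * ∏ i, (a i + Complex.I * (-t)) := by
      rw [← Finset.prod_mul_distrib]
      refine Finset.prod_congr rfl fun i _ => ?_
      linear_combination (-1 : ℂ) * ht + t ^ 2 * Complex.I_sq
    rw [key, h1, h2, ← ht]
    linear_combination (-(t ^ 2 * P.eval (t ^ 2) ^ 2)) * Complex.I_sq
  intro x y z hz
  have hQz := hQ z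
  have hSz := hS z
  rw [hQz]
  constructor <;> intro h
  · field_simp at h
    apply mul_left_cancel₀ hz
    linear_combination h - z * P.eval z ^ 2 * Complex.I_sq +
      (z * S.eval z + Q.eval z - p) * hSz + 2 * p * hSz
  · field_simp
    linear_combination z * h + z * P.eval z ^ 2 * Complex.I_sq -
      (z * S.eval z + Q.eval z + p) * hSz
end

section
/- Let k ≥ 1, a₁,…,a_k ∈ ℂ, p = ∏ aᵢ, let P, Q ∈ ℂ[z] satisfy ∏_{i=1}^{k}(aᵢ + i t) = Q(t²) + i t P(t²) for all t ∈ ℂ, let S ∈ ℂ[z] satisfy z·S(z) = Q(z) − p, and let G : ℂ × ℂ → ℂ be any function satisfying (z − t²)·G(z,t) = Q(z) + i t P(z) − ∏_{i=1}^{k}(aᵢ + i t) for all z, t ∈ ℂ. Suppose x, y, z ∈ ℂ satisfy (x + i P(z))(x − i P(z)) = (y − S(z))·(z·(y + S(z)) + 2p) and y ≠ S(z), and set t = (x + i P(z))/(y − S(z)). Then (z − t²)·(y + 2 G(z,t) − S(z)) = −2 ∏_{i=1}^{k}(aᵢ + i t). -/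
open Polynomial

/-- Tyurina's reduction of the D-type surface to an A-type equation: with
`t = (x + iP(z))/(y − S(z))` one has
`(z − t²)(y + 2G(z,t) − S(z)) = −2 ∏ᵢ (aᵢ + i t)`. -/
theorem d_surface_reduction_to_a_type (k : ℕ) (hk : 1 ≤ k) (a : Fin k → ℂ)
    (p : ℂ) (hp : p = ∏ i, a i)
    (P Q : ℂ[X])
    (hPQ : ∀ t : ℂ, ∏ i, (a i + Complex.I * t)
      = Q.eval (t ^ 2) + Complex.I * t * P.eval (t ^ 2))
    (S : ℂ[X]) (hS : ∀ z : ℂ, z * S.eval z = Q.eval z - p)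
    (G : ℂ → ℂ → ℂ)
    (hG : ∀ z t : ℂ, (z - t ^ 2) * G z t
      = Q.eval z + Complex.I * t * P.eval z - ∏ i, (a i + Complex.I * t))
    (x y z : ℂ)
    (hxyz : (x + Complex.I * P.eval z) * (x - Complex.I * P.eval z)
      = (y - S.eval z) * (z * (y + S.eval z) + 2 * p))
    (hy : y ≠ S.eval z)
    (t : ℂ) (ht : t = (x + Complex.I * P.eval z) / (y - S.eval z)) :
    (z - t ^ 2) * (y + 2 * G z t - S.eval z) = -2 * ∏ i, (a i + Complex.I * t) := by
  have hy' : y - S.eval z ≠ 0 := sub_ne_zero.mpr hy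
  have h1 : x + Complex.I * P.eval z = t * (y - S.eval z) := by
    rw [ht]; field_simp
  have h2 : t * (x - Complex.I * P.eval z) = z * (y + S.eval z) + 2 * p :=
    mul_left_cancel₀ hy' (by linear_combination hxyz - (x - Complex.I * P.eval z) * h1)
  linear_combination 2 * hG z t + t * h1 - h2 - 2 * hS z
end

section
/- Let k ≥ 1, a₁,…,a_k ∈ ℂ, p = ∏ aᵢ, and fix an index j. Then for all x, y ∈ ℂ one has, with z = −aⱼ², the factorization −z x² + (z y + p)² = (i aⱼ x + p − aⱼ² y)·(−i aⱼ x + p − aⱼ² y). Consequently every point (x, y, −aⱼ²) with i aⱼ x + p − aⱼ² y = 0 satisfies −z x² + (z y + p)² = ∏_{i=1}^{k}(z + aᵢ²), i.e. the line {z = −aⱼ², i aⱼ x + p = aⱼ² y} lies on the D-type surface. -/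
/-- At `z = −aⱼ²` the quadric `−z x² + (z y + p)²` factorizes as
`(i aⱼ x + p − aⱼ² y)(−i aⱼ x + p − aⱼ² y)`; consequently the line
`{z = −aⱼ², i aⱼ x + p = aⱼ² y}` lies on the D-type surface
`−z x² + (z y + p)² = ∏ᵢ(z + aᵢ²)`. -/
theorem line_on_d_surface (k : ℕ) (hk : 1 ≤ k) (a : Fin k → ℂ)
    (p : ℂ) (hp : p = ∏ i, a i) (j : Fin k) :
    ∀ x y z : ℂ, z = -(a j) ^ 2 →
      (-z * x ^ 2 + (z * y + p) ^ 2
        = (Complex.I * a j * x + p - (a j) ^ 2 * y)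
          * (-(Complex.I) * a j * x + p - (a j) ^ 2 * y)) ∧
      (Complex.I * a j * x + p - (a j) ^ 2 * y = 0 →
        -z * x ^ 2 + (z * y + p) ^ 2 = ∏ i, (z + a i ^ 2)) := by
  intro x y z hz
  have hfac : -z * x ^ 2 + (z * y + p) ^ 2
      = (Complex.I * a j * x + p - (a j) ^ 2 * y)
        * (-(Complex.I) * a j * x + p - (a j) ^ 2 * y) := by
    subst hz
    linear_combination (a j ^ 2 * x ^ 2) * Complex.I_sq
  refine ⟨hfac, fun h0 => ?_⟩
  rw [hfac, h0, zero_mul]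
  refine (Finset.prod_eq_zero (Finset.mem_univ j) ?_).symm
  rw [hz]; ring
end

section
/- Let a₁, a₂, a₃, a₄ ∈ ℂ and let σ₁, σ₂, σ₃, σ₄ be their elementary symmetric functions. Then for every z ∈ ℂ with z ≠ 0, the point with x = i(σ₃ − σ₁ z) and y = z − σ₂ satisfies x² − z y² = −(1/z)(∏_{i=1}^{4}(z + aᵢ²) − σ₄²) + 2 σ₄ (z − σ₂). In other words, the line X given by x + i σ₁ z − i σ₃ = 0, y − z + σ₂ = 0 lies on the affine D₄ cubic surface. -/
/-- The line `X` given by `x + iσ₁z − iσ₃ = 0`, `y − z + σ₂ = 0` lies on the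
affine D₄ cubic surface
`x² − z y² = −(1/z)(∏ᵢ(z + aᵢ²) − σ₄²) + 2σ₄ y`. -/
theorem line_X_on_d4_surface (a₁ a₂ a₃ a₄ : ℂ)
    (σ₁ σ₂ σ₃ σ₄ : ℂ)
    (hσ₁ : σ₁ = a₁ + a₂ + a₃ + a₄)
    (hσ₂ : σ₂ = a₁ * a₂ + a₁ * a₃ + a₁ * a₄ + a₂ * a₃ + a₂ * a₄ + a₃ * a₄)
    (hσ₃ : σ₃ = a₁ * a₂ * a₃ + a₁ * a₂ * a₄ + a₁ * a₃ * a₄ + a₂ * a₃ * a₄)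
    (hσ₄ : σ₄ = a₁ * a₂ * a₃ * a₄) :
    ∀ z : ℂ, z ≠ 0 →
      ∀ x y : ℂ, x = Complex.I * (σ₃ - σ₁ * z) → y = z - σ₂ →
        x ^ 2 - z * y ^ 2
          = -(1 / z) * ((z + a₁ ^ 2) * (z + a₂ ^ 2) * (z + a₃ ^ 2) * (z + a₄ ^ 2) - σ₄ ^ 2)
            + 2 * σ₄ * (z - σ₂) := by
  intro z hz x y hx hy
  subst hx hy hσ₁ hσ₂ hσ₃ hσ₄
  field_simp
  ring_nf
  simp [Complex.I_sq]
  ring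
end

section
/- Let k ≥ 1, a₁,…,a_k ∈ ℝ and p = ∏ aᵢ. Let s ∈ ℝ with s ≠ 0, let θ ∈ ℝ, and let R ∈ ℝ satisfy R² = ∏_{i=1}^{k}(aᵢ² − s²). Then the point x = R cos θ / s, y = (p − R sin θ)/s², z = −s² satisfies −z x² + (z y + p)² = ∏_{i=1}^{k}(z + aᵢ²). Hence (R, θ) are coordinates parametrizing the real points of the D-type surface lying over z = −s². -/
/-! Over `z = −s²` the left-hand side is `s² x² + (p − s² y)²`, so the substitution
`s x = R cos θ`, `p − s² y = R sin θ` turns it into `R²`, while the right-hand side is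
`∏ᵢ(aᵢ² − s²) = R²`. -/

open Real

theorem sq_mul_sq_add_sq_of_polar (p s θ R : ℝ) (hs : s ≠ 0) :
    s ^ 2 * (R * cos θ / s) ^ 2 + (-s ^ 2 * ((p - R * sin θ) / s ^ 2) + p) ^ 2 = R ^ 2 := by
  field_simp
  linear_combination R ^ 2 * sin_sq_add_cos_sq θ

theorem d_surface_real_parametrization_general (k : ℕ) (a : Fin k → ℝ)
    (p : ℝ)
    (s θ R : ℝ) (hs : s ≠ 0)
    (hR : R ^ 2 = ∏ i, (a i ^ 2 - s ^ 2))
    (x y z : ℝ)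
    (hx : x = R * Real.cos θ / s)
    (hy : y = (p - R * Real.sin θ) / s ^ 2)
    (hz : z = -s ^ 2) :
    -z * x ^ 2 + (z * y + p) ^ 2 = ∏ i, (z + a i ^ 2) := by
  subst hx hy hz
  simp only [neg_neg, neg_add_eq_sub, ← hR]
  exact sq_mul_sq_add_sq_of_polar p s θ R hs

/-- The `(R, θ)` parametrization of the real points of the D-type surface over
`z = −s²`: the point `x = R cos θ / s`, `y = (p − R sin θ)/s²`, `z = −s²` with
`R² = ∏ᵢ(aᵢ² − s²)` satisfies `−z x² + (z y + p)² = ∏ᵢ(z + aᵢ²)`. -/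
theorem d_surface_real_parametrization (k : ℕ) (hk : 1 ≤ k) (a : Fin k → ℝ)
    (p : ℝ) (hp : p = ∏ i, a i)
    (s θ R : ℝ) (hs : s ≠ 0)
    (hR : R ^ 2 = ∏ i, (a i ^ 2 - s ^ 2))
    (x y z : ℝ)
    (hx : x = R * Real.cos θ / s)
    (hy : y = (p - R * Real.sin θ) / s ^ 2)
    (hz : z = -s ^ 2) :
    -z * x ^ 2 + (z * y + p) ^ 2 = ∏ i, (z + a i ^ 2) :=
  d_surface_real_parametrization_general k a p s θ R hs hR x y z hx hy hz
end

section
/- Let k ≥ 1, a₁,…,a_k ∈ ℝ and p = ∏ aᵢ. Fix s₀ ∈ ℝ with s₀ ≠ 0 and ∏_{i=1}^{k}(aᵢ² − s₀²) > 0, and θ₀ ∈ ℝ. Define, for s near s₀ and θ ∈ ℝ: R(s) = √(∏_{i=1}^{k}(aᵢ² − s²)), x(s,θ) = R(s) cos θ / s, y(s,θ) = (p − R(s) sin θ)/s², z(s) = −s². Then at (s₀, θ₀) the Jacobian determinant (∂x/∂s)·(∂z/∂θ) − (∂x/∂θ)·(∂z/∂s) equals −(2 z(s₀) y(s₀,θ₀)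 + 2p). Equivalently, the pullback of the canonical 2-form dx ∧ dz / f_y of the surface (where f_y = −2zy − 2p) under this parametrization is ds ∧ dθ. -/
/-- The Jacobian computation showing that the canonical 2-form
`dx ∧ dz / f_y` (with `f_y = −2zy − 2p`) of the D-type surface pulls back to
`ds ∧ dθ` under the `(s, θ)` parametrization of the compact real components:
at `(s₀, θ₀)` one has
`(∂x/∂s)(∂z/∂θ) − (∂x/∂θ)(∂z/∂s) = −(2 z(s₀) y(s₀,θ₀) + 2p)`. -/
theorem d_surface_symplectic_form_pullback (k : ℕ) (hk : 1 ≤ k) (a : Fin k → ℝ)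
    (p : ℝ) (hp : p = ∏ i, a i)
    (s₀ θ₀ : ℝ) (hs₀ : s₀ ≠ 0) (hpos : 0 < ∏ i, (a i ^ 2 - s₀ ^ 2))
    (R : ℝ → ℝ) (hR : ∀ s, R s = Real.sqrt (∏ i, (a i ^ 2 - s ^ 2)))
    (x : ℝ → ℝ → ℝ) (hx : ∀ s θ, x s θ = R s * Real.cos θ / s)
    (y : ℝ → ℝ → ℝ) (hy : ∀ s θ, y s θ = (p - R s * Real.sin θ) / s ^ 2)
    (z : ℝ → ℝ) (hz : ∀ s, z s = -s ^ 2) :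
    deriv (fun s => x s θ₀) s₀ * deriv (fun _θ : ℝ => z s₀) θ₀
      - deriv (fun θ => x s₀ θ) θ₀ * deriv z s₀
      = -(2 * z s₀ * y s₀ θ₀ + 2 * p) := by
  have h1 : deriv (fun _θ : ℝ => z s₀) θ₀ = 0 := deriv_const _ _
  have h2 : deriv z s₀ = -(2 * s₀) := by
    have hzf : z = fun s => -s ^ 2 := funext hz
    rw [hzf]
    have hd : deriv (fun s : ℝ => -s ^ 2) s₀ = -deriv (fun s : ℝ => s ^ 2) s₀ :=
      deriv.neg (f := fun s : ℝ => s ^ 2)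
    rw [hd]
    simp [deriv_pow]
  have h3 : deriv (fun θ => x s₀ θ) θ₀ = (R s₀ / s₀) * (-Real.sin θ₀) := by
    have hxf : (fun θ => x s₀ θ) = fun θ => (R s₀ / s₀) * Real.cos θ := by
      funext θ; rw [hx]; ring
    rw [hxf, deriv_const_mul _ Real.differentiableAt_cos, Real.deriv_cos]
  rw [h1, h2, h3, hy, hz]
  field_simp
  ring
end
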